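/- arXiv:2507.21031 — 8 statements merged into one kernel-verified Lean document; each statement's English description precedes it below -/
import Mathlib

section
/- Let n ≥ 1 and let π, σ be permutations of {1,…,n}. Then the following are equivalent: (i) every cycle (orbit) of π is contained in a cycle of σ, and for every cycle C of σ the number of cycles of π contained in C plus the number of cycles of π⁻¹σ contained in C equals |C| + 1 (i.e., π ≤ σ in the non-crossing order on permutations); (ii) #(π) + #(π⁻¹σ) = n + #(σ) (equivalently, writing |α| := n − #(α), the equality |π| + |π⁻¹σ| = |σ| holds). -/
noncomputable def cycleCount {N : ℕ} (π : Equiv.Perm (Fin N)) : ℕ :=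
  Set.ncard {O : Set (Fin N) | ∃ x, O = {y | π.SameCycle x y}}

noncomputable def cyclesIn {N : ℕ} (π : Equiv.Perm (Fin N)) (C : Set (Fin N)) : ℕ :=
  Set.ncard {O : Set (Fin N) | (∃ x, O = {y | π.SameCycle x y}) ∧ O ⊆ C}

/-- The annular permutation `γ_{p,q}` of `{1,…,p+q}` (0-indexed as `Fin (p+q)`),
with the two cycles `(1,…,p)` and `(p+1,…,p+q)`. -/
def annularGamma (p q : ℕ) : Equiv.Perm (Fin (p + q)) :=
  finSumFinEquiv.permCongr ((finRotate p).sumCongr (finRotate q))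

/-- The interval involution `I_N = (1 2)(3 4)⋯(N-1 N)` of `{1,…,N}`
(0-indexed: swaps `2i ↔ 2i+1`), for `N` even. -/
def intervalInvolution (N : ℕ) : Equiv.Perm (Fin N) :=
  Function.Involutive.toPerm
    (fun x => ⟨if x.val % 2 = 0 then min (x.val + 1) (N - 1) else x.val - 1, by
      rcases x with ⟨v, hv⟩
      dsimp only
      split <;> omega⟩)
    (by
      intro x
      rcases x with ⟨v, hv⟩
      apply Fin.ext
      dsimp only
      split_ifs <;> omega)

/-- The subgroup generated by `π` and `ρ` acts transitively on `Fin N`. -/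
def JointTrans {N : ℕ} (π ρ : Equiv.Perm (Fin N)) : Prop :=
  ∀ x y : Fin N, ∃ g ∈ Subgroup.closure ({π, ρ} : Set (Equiv.Perm (Fin N))), g x = y

/-- `α` separates even numbers: no cycle of `α` contains two distinct even numbers
(an element `x : Fin N` represents the number `x.val + 1`). -/
def SeparatesEven {N : ℕ} (α : Equiv.Perm (Fin N)) : Prop :=
  ∀ x y : Fin N, α.SameCycle x y → (x.val + 1) % 2 = 0 → (y.val + 1) % 2 = 0 → x = y

/-- `π ∈ S_NC(p,q)`: annular non-crossing permutations. -/
def AnnularNC (p q : ℕ) (π : Equiv.Perm (Fin (p + q))) : Prop :=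
  JointTrans π (annularGamma p q) ∧
    cycleCount π + cycleCount (π⁻¹ * annularGamma p q) = p + q

/-- `A` witnesses bipartiteness of the graph `G_π`: `π(A) = A` and for each `i`,
exactly one of the (1-indexed) numbers `2i-1`, `2i` belongs to `A`. -/
def BipartSet {N : ℕ} (π : Equiv.Perm (Fin N)) (A : Set (Fin N)) : Prop :=
  (⇑π) '' A = A ∧ ∀ i : ℕ, ∀ h : 2 * i + 1 < N,
    Xor' ((⟨2 * i, Nat.lt_of_succ_lt h⟩ : Fin N) ∈ A) ((⟨2 * i + 1, h⟩ : Fin N) ∈ A)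

/-- The graph `G_π` is bipartite. -/
def GraphBipartite {N : ℕ} (π : Equiv.Perm (Fin N)) : Prop :=
  ∃ A : Set (Fin N), BipartSet π A

/-- `π ∈ J_{2n,2m}`: annular non-crossing, bipartite graph, and `π⁻¹γ` separates even. -/
def memJ (n m : ℕ) (π : Equiv.Perm (Fin (2 * n + 2 * m))) : Prop :=
  AnnularNC (2 * n) (2 * m) π ∧ GraphBipartite π ∧
    SeparatesEven (π⁻¹ * annularGamma (2 * n) (2 * m))

/-!
Write `|α| = n - #α`. Multiplying a permutation by a transposition `(a b)` merges the cycles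
through `a` and `b` if they differ and splits their common cycle otherwise, so `#` moves by
exactly one. Peeling transpositions off `γ` one at a time gives the triangle inequality
`|αγ| ≤ |α| + |γ|`, with equality only if every cycle of `α` lies in a cycle of `αγ`; the
argument works on any set invariant under `α` and `γ`.

For `α = π`, `γ = π⁻¹σ`, equality (ii) therefore makes every cycle `C` of `σ` invariant under
`π` and `π⁻¹σ`. Both cycle counts then split as sums over these `C`, and on each of them the
local triangle inequality reads `#(π on C) + #(π⁻¹σ on C) ≤ |C| + 1`; the global equality (ii)
is the sum of these inequalities, so it holds iff each of them is an equality.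
-/

theorem Set.Finite.eq_of_finsum_mem_eq_of_le {ι M : Type*} [AddCommMonoid M] [PartialOrder M]
    [IsOrderedCancelAddMonoid M] {s : Set ι} (hs : s.Finite) {f g : ι → M}
    (hfg : ∀ i ∈ s, f i ≤ g i) (h : ∑ᶠ i ∈ s, f i = ∑ᶠ i ∈ s, g i) : ∀ i ∈ s, f i = g i := by
  rw [finsum_mem_eq_finite_toFinset_sum _ hs, finsum_mem_eq_finite_toFinset_sum _ hs,
    Finset.sum_eq_sum_iff_of_le fun i hi => hfg i (hs.mem_toFinset.1 hi)] at h
  exact fun i hi => h i (hs.mem_toFinset.2 hi)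

open Set Function

namespace Equiv.Perm

variable {G : Type*}

def cycleSet (α : Perm G) (x : G) : Set G := {y | α.SameCycle x y}

/-- The number of cycles of `α` meeting `s`, i.e. contained in `s` when `s` is `α`-invariant. -/
noncomputable def cycleCountOn (α : Perm G) (s : Set G) : ℕ := (α.cycleSet '' s).ncard

section Basic

variable {α β : Perm G} {s : Set G} {x y : G}

@[simp]
lemma mem_cycleSet : y ∈ α.cycleSet x ↔ α.SameCycle x y := Iff.rfl

lemma cycleSet_eq_cycleSet_iff : α.cycleSet x = α.cycleSet y ↔ α.SameCycle x y := by
  refine ⟨fun h => ?_, fun h => Set.ext fun z => ⟨h.symm.trans, h.trans⟩⟩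
  rw [← mem_cycleSet, h]
  exact SameCycle.rfl

lemma SameCycle.mem_cycleSet_iff (h : α.SameCycle x y) {z : G} :
    x ∈ α.cycleSet z ↔ y ∈ α.cycleSet z :=
  ⟨fun hx => SameCycle.trans hx h, fun hy => SameCycle.trans hy h.symm⟩

lemma cycleSet_inv (α : Perm G) : α⁻¹.cycleSet = α.cycleSet := by
  ext x y
  exact sameCycle_inv

lemma cycleCountOn_inv (α : Perm G) (s : Set G) : α⁻¹.cycleCountOn s = α.cycleCountOn s := by
  rw [cycleCountOn, cycleSet_inv, cycleCountOn]

lemma cycleCountOn_eq_ncard_of_forall_apply_eq_self (hα : ∀ x ∈ s, α x = x) :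
    α.cycleCountOn s = s.ncard :=
  InjOn.ncard_image fun x hx _ _ hxy => (cycleSet_eq_cycleSet_iff.1 hxy).eq_of_left (hα x hx)

lemma cycleCountOn_cycleSet (σ : Perm G) (x : G) : σ.cycleCountOn (σ.cycleSet x) = 1 := by
  rw [cycleCountOn, ← ncard_singleton (σ.cycleSet x)]
  congr 1
  ext O
  refine ⟨?_, fun hO => ⟨x, .rfl, hO.symm⟩⟩
  rintro ⟨y, hy, rfl⟩
  exact (cycleSet_eq_cycleSet_iff.2 hy).symm

variable [Finite G]

lemma cycleCountOn_le_ncard (α : Perm G) (s : Set G) : α.cycleCountOn s ≤ s.ncard :=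
  ncard_image_le s.toFinite

lemma sameCycle_iff_exists_pow_apply_eq : α.SameCycle x y ↔ ∃ n : ℕ, (α ^ n) x = y :=
  ⟨SameCycle.exists_nat_pow_eq, fun ⟨n, h⟩ => ⟨n, by rwa [zpow_natCast]⟩⟩

lemma SameCycle.mem_of_mapsTo (hs : MapsTo α s s) (h : α.SameCycle x y) (hx : x ∈ s) : y ∈ s := by
  obtain ⟨n, rfl⟩ := h.exists_nat_pow_eq
  exact hs.perm_pow n hx

lemma cycleSet_subset_of_mapsTo (hs : MapsTo α s s) (hx : x ∈ s) : α.cycleSet x ⊆ s :=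
  fun _ hy => SameCycle.mem_of_mapsTo hs hy hx

lemma SameCycle.of_forall_apply {r : G → G → Prop} (hrefl : ∀ z, r z z)
    (htrans : ∀ {u v w}, r u v → r v w → r u w) (hstep : ∀ z, r z (α z))
    (h : α.SameCycle x y) : r x y := by
  have hpow : ∀ n : ℕ, r x ((α ^ n) x) := by
    intro n
    induction n with
    | zero => exact hrefl x
    | succ n ih => exact pow_succ' α n ▸ htrans ih (hstep _)
  obtain ⟨n, rfl⟩ := h.exists_nat_pow_eq
  exact hpow n

lemma cycleSet_eq_of_eqOn (hs : MapsTo α s s) (hαβ : EqOn α β s) (hx : x ∈ s) :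
    α.cycleSet x = β.cycleSet x := by
  have hpow : ∀ n : ℕ, (α ^ n) x = (β ^ n) x := by
    intro n
    induction n with
    | zero => rfl
    | succ n ih => rw [pow_succ', mul_apply, hαβ (hs.perm_pow n hx), ih, ← mul_apply, ← pow_succ']
  ext y
  simp only [mem_cycleSet, sameCycle_iff_exists_pow_apply_eq, hpow]

end Basic

section Swap

variable [DecidableEq G] {α : Perm G} {s : Set G} {a b x y : G}

lemma mapsTo_swap (ha : a ∈ s) (hb : b ∈ s) : MapsTo (swap a b) s s := by
  intro y hy
  rw [swap_apply_def]
  split_ifs <;> assumption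

lemma swap_mul_pow_apply_of_forall_ne {n : ℕ}
    (h : ∀ j, 0 < j → j ≤ n → (α ^ j) x ≠ a ∧ (α ^ j) x ≠ b) :
    ((swap a b * α) ^ n) x = (α ^ n) x := by
  induction n with
  | zero => rfl
  | succ n ih =>
    have hn := h (n + 1) n.succ_pos le_rfl
    rw [pow_succ', mul_apply, ih fun j hj hjn => h j hj (by omega), mul_apply, ← mul_apply α,
      ← pow_succ', swap_apply_of_ne_of_ne hn.1 hn.2]

lemma swap_mul_inv (α : Perm G) (a b : G) : swap a b * α⁻¹ = (α * swap a b)⁻¹ := by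
  rw [mul_inv_rev, swap_inv]

variable [Finite G]

theorem sameCycle_swap_mul_of_not_sameCycle (h : ¬α.SameCycle a b) :
    (swap a b * α).SameCycle a b := by
  obtain ⟨m, hm⟩ : ∃ m, minimalPeriod α b = m + 1 :=
    Nat.exists_eq_add_one.2 <| IsPeriodicPt.minimalPeriod_pos (orderOf_pos α) <| by
      rw [IsPeriodicPt, IsFixedPt, ← coe_pow, pow_orderOf_eq_one, coe_one, id]
  have hfollow : ((swap a b * α) ^ m) b = (α ^ m) b := by
    refine swap_mul_pow_apply_of_forall_ne fun j hj hjm => ⟨fun hja => h ?_, fun hjb => ?_⟩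
    · exact (sameCycle_iff_exists_pow_apply_eq.2 ⟨j, hja⟩).symm
    · exact not_isPeriodicPt_of_pos_of_lt_minimalPeriod hj.ne' (by omega) hjb
  have hreturn : (α ^ (m + 1)) b = b := by
    rw [coe_pow, ← hm]
    exact iterate_minimalPeriod
  refine (sameCycle_iff_exists_pow_apply_eq.2 ⟨m + 1, ?_⟩).symm
  rw [pow_succ', mul_apply, hfollow, mul_apply, ← mul_apply α, ← pow_succ', hreturn,
    swap_apply_right]

theorem not_sameCycle_swap_mul_of_sameCycle (hab : a ≠ b) (h : α.SameCycle a b) :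
    ¬(swap a b * α).SameCycle a b := by
  classical
  have hex : ∃ k, 0 < k ∧ (α ^ k) b = a :=
    let ⟨k, hk, _, hka⟩ := h.symm.exists_pow_eq''
    ⟨k, hk, hka⟩
  obtain ⟨hm, hma⟩ := Nat.find_spec hex
  set m := Nat.find hex
  have havoid : ∀ j, 0 < j → j < m → (α ^ j) b ≠ a ∧ (α ^ j) b ≠ b := by
    refine fun j hj hjm => ⟨fun hja => Nat.find_min hex hjm ⟨hj, hja⟩, fun hjb => ?_⟩
    refine Nat.find_min hex (show m - j < m by omega) ⟨by omega, ?_⟩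
    rw [← hma, ← Nat.sub_add_cancel hjm.le, pow_add, mul_apply, hjb, Nat.sub_add_cancel hjm.le]
  have hfollow : ∀ j < m, ((swap a b * α) ^ j) b = (α ^ j) b := fun j hj =>
    swap_mul_pow_apply_of_forall_ne fun i hi hij => havoid i hi (by omega)
  have hperiodic : IsPeriodicPt (swap a b * α) m b := by
    obtain ⟨k, hk⟩ : ∃ k, m = k + 1 := Nat.exists_eq_add_one.2 hm
    rw [IsPeriodicPt, IsFixedPt, ← coe_pow, hk, pow_succ', mul_apply, hfollow k (by omega),
      mul_apply, ← mul_apply α, ← pow_succ', ← hk, hma, swap_apply_left]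
  intro hc
  obtain ⟨n, hn⟩ := hc.symm.exists_nat_pow_eq
  rw [coe_pow, ← hperiodic.iterate_mod_apply, ← coe_pow] at hn
  rcases Nat.eq_zero_or_pos (n % m) with h0 | hpos
  · exact hab (by rw [← hn, h0]; rfl)
  · exact (havoid _ hpos (Nat.mod_lt n hm)).1 (hfollow _ (Nat.mod_lt n hm) ▸ hn)

end Swap

section Merge

variable [DecidableEq G] [Finite G] {α : Perm G} {s : Set G} {a b x y : G}

theorem SameCycle.swap_mul (h : ¬α.SameCycle a b) (hxy : α.SameCycle x y) :
    (swap a b * α).SameCycle x y := by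
  have hab : (swap a b * α).SameCycle a b := sameCycle_swap_mul_of_not_sameCycle h
  refine hxy.of_forall_apply (fun _ => .rfl) .trans fun z => ?_
  have hz : (swap a b * α).SameCycle z ((swap a b * α) z) := sameCycle_apply_right.2 .rfl
  rw [mul_apply, swap_apply_def] at hz
  split_ifs at hz with hza hzb
  · exact hza ▸ hz.trans hab.symm
  · exact hzb ▸ hz.trans hab
  · exact hz

theorem sameCycle_swap_mul_iff (h : ¬α.SameCycle a b) :
    (swap a b * α).SameCycle x y ↔ α.SameCycle x y ∨
      (x ∈ α.cycleSet a ∪ α.cycleSet b ∧ y ∈ α.cycleSet a ∪ α.cycleSet b) := by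
  set U := α.cycleSet a ∪ α.cycleSet b
  constructor
  · refine SameCycle.of_forall_apply (r := fun u v => α.SameCycle u v ∨ (u ∈ U ∧ v ∈ U))
      (fun _ => .inl .rfl) ?_ fun z => ?_
    · rintro u v w (huv | ⟨hu, hv⟩) (hvw | ⟨hv', hw⟩)
      · exact .inl (huv.trans hvw)
      · exact .inr ⟨(huv.mem_cycleSet_iff.or huv.mem_cycleSet_iff).2 hv', hw⟩
      · exact .inr ⟨hu, (hvw.mem_cycleSet_iff.or hvw.mem_cycleSet_iff).1 hv⟩
      · exact .inr ⟨hu, hw⟩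
    · have hz : α.SameCycle z (α z) := sameCycle_apply_right.2 .rfl
      simp only [mul_apply, swap_apply_def]
      split_ifs with hza hzb
      · exact .inr ⟨.inl (hza ▸ hz.symm), .inr .rfl⟩
      · exact .inr ⟨.inr (hzb ▸ hz.symm), .inl .rfl⟩
      · exact .inl hz
  · have hjoin : ∀ {u}, u ∈ U → (swap a b * α).SameCycle a u := by
      rintro u (hu | hu)
      · exact hu.swap_mul h
      · exact (sameCycle_swap_mul_of_not_sameCycle h).trans (hu.swap_mul h)
    rintro (hxy | ⟨hx, hy⟩)
    · exact hxy.swap_mul h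
    · exact (hjoin hx).symm.trans (hjoin hy)

lemma cycleSet_swap_mul_of_mem (h : ¬α.SameCycle a b) (hx : x ∈ α.cycleSet a ∪ α.cycleSet b) :
    (swap a b * α).cycleSet x = α.cycleSet a ∪ α.cycleSet b := by
  ext y
  rw [mem_cycleSet, sameCycle_swap_mul_iff h]
  refine ⟨?_, fun hy => .inr ⟨hx, hy⟩⟩
  rintro (hxy | ⟨-, hy⟩)
  · exact (hxy.mem_cycleSet_iff.or hxy.mem_cycleSet_iff).1 hx
  · exact hy

lemma cycleSet_swap_mul_of_notMem (h : ¬α.SameCycle a b)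
    (hx : x ∉ α.cycleSet a ∪ α.cycleSet b) : (swap a b * α).cycleSet x = α.cycleSet x := by
  ext y
  rw [mem_cycleSet, sameCycle_swap_mul_iff h]
  simp [hx]

theorem cycleCountOn_swap_mul_add_one (h : ¬α.SameCycle a b) (ha : a ∈ s) (hb : b ∈ s) :
    (swap a b * α).cycleCountOn s + 1 = α.cycleCountOn s := by
  set A := α.cycleSet a
  set B := α.cycleSet b
  have hA : A ∈ α.cycleSet '' s := mem_image_of_mem _ ha
  have hB : B ∈ α.cycleSet '' s := mem_image_of_mem _ hb
  have hAB : A ≠ B := fun he => h (cycleSet_eq_cycleSet_iff.1 he)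
  have hsplit : ∀ {z}, A = α.cycleSet z ∨ B = α.cycleSet z ↔ z ∈ A ∪ B := by
    intro z
    rw [cycleSet_eq_cycleSet_iff, cycleSet_eq_cycleSet_iff]
    rfl
  have himage : (swap a b * α).cycleSet '' s = insert (A ∪ B) (α.cycleSet '' s \ {A, B}) := by
    ext O
    simp only [mem_image, mem_insert_iff, mem_sdiff, mem_singleton_iff]
    constructor
    · rintro ⟨z, hz, rfl⟩
      by_cases hzAB : z ∈ A ∪ B
      · exact .inl (cycleSet_swap_mul_of_mem h hzAB)
      · rw [cycleSet_swap_mul_of_notMem h hzAB]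
        exact .inr ⟨⟨z, hz, rfl⟩, fun he => hzAB (hsplit.1 (he.imp Eq.symm Eq.symm))⟩
    · rintro (rfl | ⟨⟨z, hz, rfl⟩, hzAB⟩)
      · exact ⟨a, ha, cycleSet_swap_mul_of_mem h (.inl .rfl)⟩
      · exact ⟨z, hz, cycleSet_swap_mul_of_notMem h fun hz' =>
          hzAB ((hsplit.2 hz').imp Eq.symm Eq.symm)⟩
  have hnew : A ∪ B ∉ α.cycleSet '' s \ {A, B} := by
    rintro ⟨⟨z, -, hz⟩, -⟩
    have hza : α.SameCycle z a := by rw [← mem_cycleSet, hz]; exact .inl .rfl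
    have hzb : α.SameCycle z b := by rw [← mem_cycleSet, hz]; exact .inr .rfl
    exact h (hza.symm.trans hzb)
  have hpair : ({A, B} : Set (Set G)) ⊆ α.cycleSet '' s := pair_subset hA hB
  have hle := ncard_le_ncard hpair (toFinite _)
  rw [ncard_pair hAB] at hle
  rw [cycleCountOn, himage, ncard_insert_of_notMem hnew (toFinite _),
    ncard_sdiff hpair (toFinite _), ncard_pair hAB, cycleCountOn]
  omega

theorem cycleCountOn_swap_mul (hab : a ≠ b) (h : α.SameCycle a b) (ha : a ∈ s) (hb : b ∈ s) :
    (swap a b * α).cycleCountOn s = α.cycleCountOn s + 1 := by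
  simpa only [swap_mul_self_mul] using
    (cycleCountOn_swap_mul_add_one (not_sameCycle_swap_mul_of_sameCycle hab h) ha hb).symm

theorem cycleCountOn_mul_swap_add_one (h : ¬α.SameCycle a b) (ha : a ∈ s) (hb : b ∈ s) :
    (α * swap a b).cycleCountOn s + 1 = α.cycleCountOn s := by
  simpa only [swap_mul_inv, cycleCountOn_inv] using
    cycleCountOn_swap_mul_add_one (α := α⁻¹) (mt sameCycle_inv.1 h) ha hb

theorem cycleCountOn_mul_swap (hab : a ≠ b) (h : α.SameCycle a b) (ha : a ∈ s) (hb : b ∈ s) :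
    (α * swap a b).cycleCountOn s = α.cycleCountOn s + 1 := by
  simpa only [swap_mul_inv, cycleCountOn_inv] using
    cycleCountOn_swap_mul (α := α⁻¹) hab (sameCycle_inv.2 h) ha hb

theorem SameCycle.mul_swap (h : ¬α.SameCycle a b) (hxy : α.SameCycle x y) :
    (α * swap a b).SameCycle x y := by
  rw [← sameCycle_inv, ← swap_mul_inv]
  exact (sameCycle_inv.2 hxy).swap_mul (mt sameCycle_inv.1 h)

end Merge

section Triangle

variable [Finite G] {α γ : Perm G} {s : Set G}

theorem cycleCountOn_add_cycleCountOn_le (hα : MapsTo α s s) (hγ : MapsTo γ s s) :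
    α.cycleCountOn s + γ.cycleCountOn s ≤ s.ncard + (α * γ).cycleCountOn s ∧
      (α.cycleCountOn s + γ.cycleCountOn s = s.ncard + (α * γ).cycleCountOn s →
        ∀ x ∈ s, ∀ y, α.SameCycle x y → (α * γ).SameCycle x y) := by
  classical
  obtain ⟨k, hk⟩ : ∃ k, s.ncard - γ.cycleCountOn s = k := ⟨_, rfl⟩
  induction k using Nat.strong_induction_on generalizing α γ with
  | _ k ih =>
  by_cases hmoved : ∃ x ∈ s, γ x ≠ x
  swap
  · have hfix : ∀ x ∈ s, γ x = x := fun x hx => not_not.1 fun h => hmoved ⟨x, hx, h⟩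
    have hαγ : ∀ x ∈ s, α.cycleSet x = (α * γ).cycleSet x := fun x hx =>
      cycleSet_eq_of_eqOn hα (fun y hy => by rw [mul_apply, hfix y hy]) hx
    have hcount : (α * γ).cycleCountOn s = α.cycleCountOn s :=
      congrArg ncard (image_congr hαγ).symm
    refine ⟨by rw [cycleCountOn_eq_ncard_of_forall_apply_eq_self hfix, hcount, add_comm], ?_⟩
    intro _ x hx y hxy
    rw [← mem_cycleSet, ← hαγ x hx]
    exact hxy
  -- `c * γ` has one cycle more than `γ` (it fixes `x`), and `(α * c) * (c * γ) = α * γ`.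
  obtain ⟨x, hxs, hx⟩ := hmoved
  have hγx : γ x ∈ s := hγ hxs
  set c := swap x (γ x)
  have hc : MapsTo c s s := mapsTo_swap hxs hγx
  have hsplit : (c * γ).cycleCountOn s = γ.cycleCountOn s + 1 :=
    cycleCountOn_swap_mul hx.symm (sameCycle_apply_right.2 .rfl) hxs hγx
  have hbound := cycleCountOn_le_ncard (c * γ) s
  have hprod : α * c * (c * γ) = α * γ := by
    rw [mul_assoc, swap_mul_self_mul]
  obtain ⟨ihle, iheq⟩ :=
    hprod ▸ ih _ (by omega) (α := α * c) (γ := c * γ) (hα.comp hc) (hc.comp hγ) rfl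
  by_cases hxα : α.SameCycle x (γ x)
  · have : (α * c).cycleCountOn s = α.cycleCountOn s + 1 :=
      cycleCountOn_mul_swap hx.symm hxα hxs hγx
    exact ⟨by omega, fun h => absurd h (by omega)⟩
  · have : (α * c).cycleCountOn s + 1 = α.cycleCountOn s :=
      cycleCountOn_mul_swap_add_one hxα hxs hγx
    exact ⟨by omega, fun h y hy z hyz => iheq (by omega) y hy z (hyz.mul_swap hxα)⟩

lemma sameCycle_le_of_cycleCountOn_add_eq
    (h : α.cycleCountOn univ + γ.cycleCountOn univ = Nat.card G + (α * γ).cycleCountOn univ) :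
    α.SameCycle ≤ (α * γ).SameCycle := by
  have := (cycleCountOn_add_cycleCountOn_le (mapsTo_univ α univ) (mapsTo_univ γ univ)).2
  rw [ncard_univ] at this
  exact fun x y => this h x (mem_univ x) y

end Triangle

section Decomposition

variable [Finite G]

theorem ncard_range_eq_finsum_cycles {X : Type*} (σ : Perm G) {g : G → X}
    (hg : ∀ x y, g x = g y → σ.SameCycle x y) :
    (range g).ncard = ∑ᶠ C ∈ range σ.cycleSet, (g '' C).ncard := by
  rw [← (toFinite _).ncard_biUnion (fun _ _ => toFinite _)]
  · congr 1
    ext z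
    simp only [mem_range, mem_iUnion, mem_image, exists_prop]
    constructor
    · rintro ⟨x, rfl⟩
      exact ⟨_, ⟨x, rfl⟩, x, .rfl, rfl⟩
    · rintro ⟨_, _, x, _, rfl⟩
      exact ⟨x, rfl⟩
  · rintro _ ⟨x, rfl⟩ _ ⟨x', rfl⟩ hne
    refine disjoint_left.2 ?_
    rintro _ ⟨y, hy, rfl⟩ ⟨y', hy', hyy'⟩
    exact hne (cycleSet_eq_cycleSet_iff.2 (hy.trans ((hg y' y hyy').symm.trans hy'.symm)))

lemma card_eq_finsum_ncard_cycles (σ : Perm G) :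
    Nat.card G = ∑ᶠ C ∈ range σ.cycleSet, C.ncard := by
  simpa using ncard_range_eq_finsum_cycles σ (g := id) fun x y (h : x = y) => h ▸ .rfl

lemma cycleCountOn_univ_eq_finsum {δ σ : Perm G}
    (hδσ : δ.SameCycle ≤ σ.SameCycle) :
    δ.cycleCountOn univ = ∑ᶠ C ∈ range σ.cycleSet, δ.cycleCountOn C := by
  rw [cycleCountOn, image_univ]
  exact ncard_range_eq_finsum_cycles σ fun x y h => hδσ x y (cycleSet_eq_cycleSet_iff.1 h)

end Decomposition

section NoncrossingOrder

variable {π σ : Perm G}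

lemma mapsTo_cycleSet (h : ∀ y, σ.SameCycle y (π y)) (x : G) :
    MapsTo π (σ.cycleSet x) (σ.cycleSet x) :=
  fun _ hy => SameCycle.trans hy (h _)

lemma sameCycle_apply_of_le (hπσ : π.SameCycle ≤ σ.SameCycle) (y : G) :
    σ.SameCycle y (π y) :=
  hπσ _ _ (sameCycle_apply_right.2 .rfl)

lemma sameCycle_inv_mul_apply_of_le (hπσ : π.SameCycle ≤ σ.SameCycle) (y : G) :
    σ.SameCycle y ((π⁻¹ * σ) y) :=
  (sameCycle_apply_right.2 .rfl).trans (hπσ _ _ (sameCycle_symm_apply_right.2 .rfl))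

variable [Finite G]

lemma cycleCountOn_add_le_ncard_add_one (hπσ : π.SameCycle ≤ σ.SameCycle) (x : G) :
    π.cycleCountOn (σ.cycleSet x) + (π⁻¹ * σ).cycleCountOn (σ.cycleSet x) ≤
      (σ.cycleSet x).ncard + 1 := by
  have := (cycleCountOn_add_cycleCountOn_le (mapsTo_cycleSet (sameCycle_apply_of_le hπσ) x)
    (mapsTo_cycleSet (sameCycle_inv_mul_apply_of_le hπσ) x)).1
  rwa [mul_inv_cancel_left, cycleCountOn_cycleSet] at this

lemma cycleCountOn_add_eq_finsum (hπσ : π.SameCycle ≤ σ.SameCycle) :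
    π.cycleCountOn univ + (π⁻¹ * σ).cycleCountOn univ =
      ∑ᶠ C ∈ range σ.cycleSet, (π.cycleCountOn C + (π⁻¹ * σ).cycleCountOn C) := by
  have hρσ : (π⁻¹ * σ).SameCycle ≤ σ.SameCycle := fun x y hxy =>
    hxy.of_forall_apply (fun _ => .rfl) .trans (sameCycle_inv_mul_apply_of_le hπσ)
  rw [finsum_mem_add_distrib (toFinite _), cycleCountOn_univ_eq_finsum hπσ,
    cycleCountOn_univ_eq_finsum hρσ]

lemma card_add_cycleCountOn_eq_finsum (σ : Perm G) :
    Nat.card G + σ.cycleCountOn univ = ∑ᶠ C ∈ range σ.cycleSet, (C.ncard + 1) := by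
  rw [finsum_mem_add_distrib (toFinite _), finsum_one, ← card_eq_finsum_ncard_cycles,
    cycleCountOn, image_univ]

theorem cycleCountOn_add_cycleCountOn_inv_mul_eq_iff :
    (π.SameCycle ≤ σ.SameCycle ∧ ∀ x,
        π.cycleCountOn (σ.cycleSet x) + (π⁻¹ * σ).cycleCountOn (σ.cycleSet x) =
          (σ.cycleSet x).ncard + 1) ↔
      π.cycleCountOn univ + (π⁻¹ * σ).cycleCountOn univ = Nat.card G + σ.cycleCountOn univ := by
  constructor
  · rintro ⟨hπσ, hloc⟩
    rw [cycleCountOn_add_eq_finsum hπσ, card_add_cycleCountOn_eq_finsum]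
    exact finsum_mem_congr rfl fun _ ⟨x, hx⟩ => hx ▸ hloc x
  · intro h
    have hπσ := sameCycle_le_of_cycleCountOn_add_eq (γ := π⁻¹ * σ) (by rwa [mul_inv_cancel_left])
    rw [mul_inv_cancel_left] at hπσ
    rw [cycleCountOn_add_eq_finsum hπσ, card_add_cycleCountOn_eq_finsum] at h
    refine ⟨hπσ, fun x => (toFinite _).eq_of_finsum_mem_eq_of_le ?_ h _ ⟨x, rfl⟩⟩
    rintro _ ⟨y, rfl⟩
    exact cycleCountOn_add_le_ncard_add_one hπσ y

end NoncrossingOrder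

end Equiv.Perm

open Equiv.Perm

lemma cycleCount_eq_cycleCountOn_univ {N : ℕ} (π : Equiv.Perm (Fin N)) :
    cycleCount π = π.cycleCountOn univ := by
  rw [cycleCount, cycleCountOn, image_univ]
  congr 1
  ext O
  exact exists_congr fun _ => eq_comm

lemma cyclesIn_eq_cycleCountOn {N : ℕ} {π : Equiv.Perm (Fin N)} {C : Set (Fin N)}
    (hC : MapsTo π C C) : cyclesIn π C = π.cycleCountOn C := by
  rw [cyclesIn, cycleCountOn]
  congr 1
  ext O
  constructor
  · rintro ⟨⟨x, rfl⟩, hxC⟩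
    exact ⟨x, hxC SameCycle.rfl, rfl⟩
  · rintro ⟨x, hx, rfl⟩
    exact ⟨⟨x, rfl⟩, cycleSet_subset_of_mapsTo hC hx⟩

theorem stmt_0_general (n : ℕ) (π σ : Equiv.Perm (Fin n)) :
    ((∀ x y : Fin n, π.SameCycle x y → σ.SameCycle x y) ∧
      ∀ x : Fin n,
        cyclesIn π {y | σ.SameCycle x y} + cyclesIn (π⁻¹ * σ) {y | σ.SameCycle x y} =
          Set.ncard {y | σ.SameCycle x y} + 1) ↔
    cycleCount π + cycleCount (π⁻¹ * σ) = n + cycleCount σ := by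
  simp only [cycleCount_eq_cycleCountOn_univ]
  refine Iff.trans ?_ (cycleCountOn_add_cycleCountOn_inv_mul_eq_iff.trans (by rw [Nat.card_fin]))
  refine and_congr_right fun hπσ => forall_congr' fun x => ?_
  change cyclesIn π (σ.cycleSet x) + cyclesIn (π⁻¹ * σ) (σ.cycleSet x) = _ ↔ _
  rw [cyclesIn_eq_cycleCountOn (mapsTo_cycleSet (sameCycle_apply_of_le hπσ) x),
    cyclesIn_eq_cycleCountOn (mapsTo_cycleSet (sameCycle_inv_mul_apply_of_le hπσ) x)]
  rfl

theorem stmt_0 (n : ℕ) (hn : 1 ≤ n) (π σ : Equiv.Perm (Fin n)) :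
    ((∀ x y : Fin n, π.SameCycle x y → σ.SameCycle x y) ∧
      ∀ x : Fin n,
        cyclesIn π {y | σ.SameCycle x y} + cyclesIn (π⁻¹ * σ) {y | σ.SameCycle x y} =
          Set.ncard {y | σ.SameCycle x y} + 1) ↔
    cycleCount π + cycleCount (π⁻¹ * σ) = n + cycleCount σ :=
  stmt_0_general n π σ
end

section
/- Let n, m ≥ 1, set N = 2n+2m and γ = γ_{2n,2m}. If π ∈ S_NC(2n,2m) is such that π⁻¹γ separates even numbers, then the subgroup generated by π and the interval involution I_N acts transitively on {1,…,N} (that is, the join of the cycle partition of π with the interval pairing {{1,2},…,{N−1,N}} is the one-block partition). -/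
open Equiv MulAction

section ClassPreserving

variable {α : Type*}

def Setoid.classPreserving (r : Setoid α) : Subgroup (Perm α) where
  carrier := {g | ∀ x, r (g x) x}
  one_mem' x := r.refl x
  mul_mem' hg hh x := r.trans (hg _) (hh x)
  inv_mem' {g} hg x := r.symm (by simpa using hg (g⁻¹ x))

/-- Going once around the `σ`-cycle of `x` leads back to `x`, and every step but the first
stays in one class. -/
theorem Setoid.rel_apply_of_forall_sameCycle [Finite α] (r : Setoid α) {σ : Perm α} {x : α}
    (h : ∀ y, σ.SameCycle x y → y ≠ x → r (σ y) y) : r (σ x) x := by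
  have around : ∀ j : ℕ, r ((σ ^ (j + 1)) x) (σ x) := by
    intro j
    induction j with
    | zero => simp
    | succ j ih =>
      rw [pow_succ', Perm.mul_apply]
      by_cases hx : (σ ^ (j + 1)) x = x
      · rw [hx]
      · exact r.trans (h _ (Perm.sameCycle_pow_right.2 (Perm.SameCycle.refl _ _)) hx) ih
  have hret : (σ ^ (orderOf σ - 1 + 1)) x = x := by
    rw [Nat.sub_add_cancel (orderOf_pos σ), pow_orderOf_eq_one, Perm.one_apply]
  simpa [hret] using r.symm (around (orderOf σ - 1))

theorem mem_classPreserving_orbitRel {G : Subgroup (Perm α)} {g : Perm α} (hg : g ∈ G) :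
    g ∈ (orbitRel G α).classPreserving :=
  fun _ => ⟨⟨g, hg⟩, rfl⟩

end ClassPreserving

theorem JointTrans.of_mem_classPreserving {N : ℕ} {π ρ ρ' : Perm (Fin N)} (h : JointTrans π ρ)
    (hρ : ρ ∈ (orbitRel (Subgroup.closure {π, ρ'}) (Fin N)).classPreserving) :
    JointTrans π ρ' := by
  have hle : Subgroup.closure {π, ρ} ≤
      (orbitRel (Subgroup.closure {π, ρ'}) (Fin N)).classPreserving := by
    rw [Subgroup.closure_le]
    rintro g (rfl | rfl)
    · exact mem_classPreserving_orbitRel (Subgroup.subset_closure (Set.mem_insert _ _))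
    · exact hρ
  intro x y
  obtain ⟨g, hg, rfl⟩ := h x y
  obtain ⟨⟨k, hk⟩, hkx⟩ := hle hg x
  exact ⟨k, hk, hkx⟩

theorem finRotate_val_of_succ_lt {p : ℕ} (i : Fin p) (h : i.val + 1 < p) :
    (finRotate p i).val = i.val + 1 := by
  obtain ⟨p, rfl⟩ : ∃ k, p = k + 1 := ⟨p - 1, by omega⟩
  exact coe_finRotate_of_ne_last (Fin.ne_of_val_ne (by simp only [Fin.val_last]; omega))

theorem annularGamma_val_of_succ_lt {p q : ℕ} (a : Fin (p + q))
    (h : a.val + 1 < p ∨ p ≤ a.val ∧ a.val + 1 < p + q) :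
    (annularGamma p q a).val = a.val + 1 := by
  induction a using Fin.addCases with
  | left i =>
    have : i.val + 1 < p := by simp only [Fin.val_castAdd] at h; omega
    simp [annularGamma, permCongr_apply, finRotate_val_of_succ_lt i this, -finRotate_apply]
  | right i =>
    have : i.val + 1 < q := by simp only [Fin.val_natAdd] at h; omega
    simp [annularGamma, permCongr_apply, finRotate_val_of_succ_lt i this, -finRotate_apply]
    omega

theorem intervalInvolution_val_of_even {N : ℕ} (a : Fin N) (ha : a.val % 2 = 0)
    (h : a.val + 1 < N) : (intervalInvolution N a).val = a.val + 1 := by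
  show (if a.val % 2 = 0 then min (a.val + 1) (N - 1) else a.val - 1) = a.val + 1
  rw [if_pos ha]
  omega

theorem annularGamma_eq_intervalInvolution {n m : ℕ} (a : Fin (2 * n + 2 * m))
    (ha : a.val % 2 = 0) : annularGamma (2 * n) (2 * m) a = intervalInvolution _ a := by
  have := a.isLt
  ext
  rw [intervalInvolution_val_of_even a ha (by omega), annularGamma_val_of_succ_lt]
  omega

theorem stmt_1_general (n m : ℕ)
    (π : Equiv.Perm (Fin (2 * n + 2 * m)))
    (hπ : AnnularNC (2 * n) (2 * m) π)
    (hsep : SeparatesEven (π⁻¹ * annularGamma (2 * n) (2 * m))) :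
    JointTrans π (intervalInvolution (2 * n + 2 * m)) := by
  set γ := annularGamma (2 * n) (2 * m)
  set r := orbitRel (Subgroup.closure {π, intervalInvolution (2 * n + 2 * m)})
    (Fin (2 * n + 2 * m))
  have hπr : π ∈ r.classPreserving :=
    mem_classPreserving_orbitRel (Subgroup.subset_closure (Set.mem_insert _ _))
  have hIr : intervalInvolution _ ∈ r.classPreserving :=
    mem_classPreserving_orbitRel (Subgroup.subset_closure (Set.mem_insert_of_mem _ rfl))
  have hγ_even : ∀ a : Fin _, a.val % 2 = 0 → r (γ a) a := fun a ha => by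
    rw [annularGamma_eq_intervalInvolution a ha]
    exact hIr a
  refine hπ.1.of_mem_classPreserving fun a => ?_
  rcases Nat.mod_two_eq_zero_or_one a.val with ha | ha
  · exact hγ_even a ha
  have hα : r ((π⁻¹ * γ) a) a := r.rel_apply_of_forall_sameCycle fun y hy hya => by
    have hy_even : y.val % 2 = 0 := by
      by_contra hy_odd
      exact hya (hsep a y hy (by omega) (by omega)).symm
    exact r.trans ((inv_mem hπr) _) (hγ_even y hy_even)
  simpa using r.trans (hπr _) hα

theorem stmt_1 (n m : ℕ) (hn : 1 ≤ n) (hm : 1 ≤ m)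
    (π : Equiv.Perm (Fin (2 * n + 2 * m)))
    (hπ : AnnularNC (2 * n) (2 * m) π)
    (hsep : SeparatesEven (π⁻¹ * annularGamma (2 * n) (2 * m))) :
    JointTrans π (intervalInvolution (2 * n + 2 * m)) :=
  stmt_1_general n m π hπ hsep
end

section
/- Let n, m ≥ 1 and let π ∈ J_{2n,2m}. Then there exist exactly two subsets A ⊆ {1,…,2n+2m} such that π(A) = A and for every i ∈ {1,…,n+m} exactly one of 2i−1 and 2i belongs to A; moreover these two subsets are complements of each other in {1,…,2n+2m}. -/
/-!
If `A` and `B` both witness that `G_π` is bipartite, their symmetric difference `D` is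
`π`-invariant and a union of pairs `{2i-1, 2i}`. Since `γ` sends every odd number `2i-1` to its
partner `2i`, the permutation `σ = π⁻¹γ` keeps membership in `D` at every odd point. Each cycle of
`σ` contains at most one even number, so going once around a cycle shows that `σ` keeps `D`
everywhere, and hence so does `γ = πσ`. As `⟨π, γ⟩` is transitive, `D` is empty or everything,
that is `B = A` or `B = Aᶜ`.
-/

open Equiv Set
open scoped Pointwise

theorem Equiv.Perm.apply_mem_iff_of_cycles_meet_at_most_once {α : Type*} [Finite α]
    {f : Perm α} {Q S : Set α} (hS : ∀ x ∈ S, ∀ y ∈ S, f.SameCycle x y → x = y)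
    (hQ : ∀ x ∉ S, f x ∈ Q ↔ x ∈ Q) (x : α) : f x ∈ Q ↔ x ∈ Q := by
  by_cases hx : x ∈ S
  swap
  · exact hQ x hx
  have walk : ∀ i : ℕ, (f ^ (i + 1)) x ∈ Q ↔ f x ∈ Q := by
    intro i
    induction i with
    | zero => simp
    | succ i ih =>
      rw [pow_succ', Perm.mul_apply]
      by_cases hi : (f ^ (i + 1)) x ∈ S
      -- a walk from `x` can only re-enter `S` at `x` itself
      · rw [← hS x hx _ hi (Perm.sameCycle_pow_right.2 (Perm.SameCycle.refl f x))]
      · rw [hQ _ hi, ih]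
  have := walk (orderOf f - 1)
  rwa [Nat.sub_add_cancel (orderOf_pos f), pow_orderOf_eq_one, Perm.one_apply, Iff.comm] at this

theorem Equiv.Perm.mem_stabilizer_of_apply_mem_iff {α : Type*} {g : Perm α} {Q : Set α}
    (hg : ∀ x, g x ∈ Q ↔ x ∈ Q) : g ∈ MulAction.stabilizer (Perm α) Q := by
  rw [MulAction.mem_stabilizer_iff]
  ext x
  rw [mem_smul_set_iff_inv_smul_mem, ← hg, Perm.smul_def, Perm.coe_inv, apply_symm_apply]

theorem JointTrans.eq_empty_or_eq_univ {N : ℕ} {π ρ : Perm (Fin N)} (h : JointTrans π ρ)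
    {Q : Set (Fin N)} (hπ : ∀ x, π x ∈ Q ↔ x ∈ Q) (hρ : ∀ x, ρ x ∈ Q ↔ x ∈ Q) :
    Q = ∅ ∨ Q = univ := by
  have hle : Subgroup.closure {π, ρ} ≤ MulAction.stabilizer (Perm (Fin N)) Q := by
    rw [Subgroup.closure_le]
    rintro g (rfl | rfl)
    · exact Perm.mem_stabilizer_of_apply_mem_iff hπ
    · exact Perm.mem_stabilizer_of_apply_mem_iff hρ
  refine Q.eq_empty_or_nonempty.imp id fun ⟨x, hx⟩ => eq_univ_of_forall fun y => ?_
  obtain ⟨g, hg, rfl⟩ := h x y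
  rw [← MulAction.mem_stabilizer_iff.1 (hle hg)]
  exact smul_mem_smul_set hx

theorem annularGamma_apply_val {p q : ℕ} {x : Fin (p + q)} (hp : x.val + 1 ≠ p)
    (hpq : x.val + 1 ≠ p + q) : (annularGamma p q x).val = x.val + 1 := by
  induction x using Fin.addCases with
  | left i =>
    simp only [Fin.val_castAdd] at hp
    simpa [annularGamma] using Fin.val_add_one_of_lt' (i := i) (by omega)
  | right j =>
    simp only [Fin.val_natAdd] at hpq
    simp [annularGamma, Fin.val_add_one_of_lt' (i := j) (by omega), add_assoc]

namespace BipartSet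

variable {N : ℕ} {π : Perm (Fin N)} {A B : Set (Fin N)}

theorem apply_mem_iff (hA : BipartSet π A) (x : Fin N) : π x ∈ A ↔ x ∈ A := by
  conv_lhs => rw [← hA.1]
  exact π.injective.mem_set_image

theorem compl (hA : BipartSet π A) : BipartSet π Aᶜ :=
  ⟨by rw [image_compl_eq π.bijective, hA.1], fun i h => xor_not_not.2 (hA.2 i h)⟩

theorem apply_mem_symmDiff_iff (hA : BipartSet π A) (hB : BipartSet π B) (x : Fin N) :
    π x ∈ symmDiff A B ↔ x ∈ symmDiff A B := by
  simp only [mem_symmDiff, hA.apply_mem_iff, hB.apply_mem_iff]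

theorem mem_symmDiff_iff_of_succ (hA : BipartSet π A) (hB : BipartSet π B) {x y : Fin N}
    (hx : x.val % 2 = 0) (hy : y.val = x.val + 1) :
    y ∈ symmDiff A B ↔ x ∈ symmDiff A B := by
  have hlt : 2 * (x.val / 2) + 1 < N := by omega
  have hxA := xor_iff_iff_not.1 (hA.2 _ hlt)
  have hxB := xor_iff_iff_not.1 (hB.2 _ hlt)
  rw [show (⟨2 * (x.val / 2), _⟩ : Fin N) = x from Fin.ext (by dsimp only; omega),
    show (⟨2 * (x.val / 2) + 1, hlt⟩ : Fin N) = y from Fin.ext (by dsimp only; omega)]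
    at hxA hxB
  simp only [mem_symmDiff]
  tauto

end BipartSet

theorem memJ.bipartSet_eq_or_eq_compl {n m : ℕ} {π : Perm (Fin (2 * n + 2 * m))}
    (hπ : memJ n m π) {A B : Set (Fin (2 * n + 2 * m))} (hA : BipartSet π A)
    (hB : BipartSet π B) : B = A ∨ B = Aᶜ := by
  set γ := annularGamma (2 * n) (2 * m)
  set D := symmDiff A B
  have hπD : ∀ x, π x ∈ D ↔ x ∈ D := hA.apply_mem_symmDiff_iff hB
  have hγ_even : ∀ x : Fin (2 * n + 2 * m), x.val % 2 = 0 → (γ x ∈ D ↔ x ∈ D) :=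
    fun x hx =>
      hA.mem_symmDiff_iff_of_succ hB hx (annularGamma_apply_val (by omega) (by omega))
  have hσ : ∀ x, (π⁻¹ * γ) x ∈ D ↔ x ∈ D := by
    refine Perm.apply_mem_iff_of_cycles_meet_at_most_once (S := {x | (x.val + 1) % 2 = 0})
      (fun x hx y hy hxy => hπ.2.2 x y hxy hx hy) fun x hx => ?_
    rw [← hπD, Perm.mul_apply, Perm.coe_inv, apply_symm_apply]
    exact hγ_even x (by simp only [mem_ofPred_eq] at hx; omega)
  have hγ : ∀ x, γ x ∈ D ↔ x ∈ D := fun x => by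
    simpa only [Perm.mul_apply, Perm.coe_inv, apply_symm_apply] using (hπD _).trans (hσ x)
  rcases hπ.1.1.eq_empty_or_eq_univ hπD hγ with hD | hD
  · exact .inl (symmDiff_eq_bot.1 hD).symm
  · exact .inr ((symmDiff_eq_top A B).1 hD).compl_eq.symm

theorem stmt_2_general (n m : ℕ) (hn : 1 ≤ n)
    (π : Equiv.Perm (Fin (2 * n + 2 * m))) (hπ : memJ n m π) :
    ∃ A : Set (Fin (2 * n + 2 * m)), BipartSet π A ∧ BipartSet π Aᶜ ∧ A ≠ Aᶜ ∧
      ∀ B : Set (Fin (2 * n + 2 * m)), BipartSet π B → B = A ∨ B = Aᶜ := by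
  obtain ⟨A, hA⟩ := hπ.2.1
  have : Nonempty (Fin (2 * n + 2 * m)) := ⟨⟨0, by omega⟩⟩
  exact ⟨A, hA, hA.compl, ne_compl_self, fun B hB => hπ.bipartSet_eq_or_eq_compl hA hB⟩

theorem stmt_2 (n m : ℕ) (hn : 1 ≤ n) (hm : 1 ≤ m)
    (π : Equiv.Perm (Fin (2 * n + 2 * m))) (hπ : memJ n m π) :
    ∃ A : Set (Fin (2 * n + 2 * m)), BipartSet π A ∧ BipartSet π Aᶜ ∧ A ≠ Aᶜ ∧
      ∀ B : Set (Fin (2 * n + 2 * m)), BipartSet π B → B = A ∨ B = Aᶜ :=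
  stmt_2_general n m hn π hπ
end

section
/- Let n, m ≥ 1, set N = 2n+2m and γ = γ_{2n,2m}. Let σ ∈ S_NC(2n,2m) be such that σ separates even numbers and the graph G_{γσ⁻¹} is bipartite. Then every cycle of σ consisting entirely of odd numbers has even cardinality. -/
lemma gamma_val_even (p q : ℕ) (hp : p % 2 = 0) (hq : q % 2 = 0)
    (x : Fin (p + q)) (hx : x.val % 2 = 0) :
    (annularGamma p q x).val = x.val + 1 := by
  unfold annularGamma
  rw [Equiv.permCongr_apply]
  by_cases h : x.val < p
  · obtain ⟨pp, rfl⟩ : ∃ pp, p = pp + 1 := ⟨p - 1, by omega⟩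
    have hxe : x = Fin.castAdd q ⟨x.val, h⟩ := by apply Fin.ext; simp
    rw [hxe, finSumFinEquiv_symm_apply_castAdd]
    simp only [Equiv.sumCongr_apply, Sum.map_inl, finRotate_succ_apply,
      finSumFinEquiv_apply_left]
    simp only [Fin.coe_castAdd, Fin.add_def, Fin.val_one']
    have h1 : 1 % (pp + 1) = 1 := Nat.mod_eq_of_lt (by omega)
    rw [h1, Nat.mod_eq_of_lt (by omega)]
  · push_neg at h
    have hq' : x.val - p < q := by have := x.isLt; omega
    obtain ⟨qq, rfl⟩ : ∃ qq, q = qq + 1 := ⟨q - 1, by omega⟩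
    have hxe : x = Fin.natAdd p ⟨x.val - p, hq'⟩ := by apply Fin.ext; simp; omega
    rw [hxe, finSumFinEquiv_symm_apply_natAdd]
    simp only [Equiv.sumCongr_apply, Sum.map_inr, finRotate_succ_apply,
      finSumFinEquiv_apply_right]
    simp only [Fin.coe_natAdd, Fin.add_def, Fin.val_one']
    have h1 : 1 % (qq + 1) = 1 := Nat.mod_eq_of_lt (by omega)
    rw [h1, Nat.mod_eq_of_lt (by omega)]
    omega

theorem stmt_5 (n m : ℕ) (hn : 1 ≤ n) (hm : 1 ≤ m)
    (σ : Equiv.Perm (Fin (2 * n + 2 * m)))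
    (hσ : AnnularNC (2 * n) (2 * m) σ)
    (hsep : SeparatesEven σ)
    (hbip : GraphBipartite (annularGamma (2 * n) (2 * m) * σ⁻¹)) :
    ∀ x : Fin (2 * n + 2 * m),
      (∀ y : Fin (2 * n + 2 * m), σ.SameCycle x y → (y.val + 1) % 2 = 1) →
      Even (Set.ncard {y | σ.SameCycle x y}) := by
  intro x hall
  obtain ⟨A, hA1, hA2⟩ := hbip
  set γ := annularGamma (2 * n) (2 * m) with hγ
  have hmem : ∀ y : Fin (2 * n + 2 * m), y ∈ A ↔ (γ * σ⁻¹) y ∈ A := by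
    intro y
    constructor
    · intro hy; rw [← hA1]; exact ⟨y, hy, rfl⟩
    · intro hy; rw [← hA1] at hy
      obtain ⟨z, hz, hzy⟩ := hy
      rwa [← (Equiv.injective (γ * σ⁻¹)) hzy]
  have key : ∀ y : Fin (2 * n + 2 * m), y.val % 2 = 0 → ((σ y ∈ A) ↔ ¬ (y ∈ A)) := by
    intro y hy
    have h1 : σ y ∈ A ↔ γ y ∈ A := by
      rw [hmem (σ y)]
      simp [Equiv.Perm.mul_apply]
    have hN : y.val + 1 < 2 * n + 2 * m := by
      have h2 := y.isLt; omega
    have hg : γ y = ⟨y.val + 1, hN⟩ := by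
      apply Fin.ext
      exact gamma_val_even (2 * n) (2 * m) (by omega) (by omega) y hy
    have h2 := hA2 (y.val / 2) (by omega : 2 * (y.val / 2) + 1 < 2 * n + 2 * m)
    have hy1 : (⟨2 * (y.val / 2), by omega⟩ : Fin (2 * n + 2 * m)) = y := by
      apply Fin.ext; simp; omega
    have hy2 : (⟨2 * (y.val / 2) + 1, by omega⟩ : Fin (2 * n + 2 * m))
        = (⟨y.val + 1, hN⟩ : Fin (2 * n + 2 * m)) := by
      apply Fin.ext; simp; omega
    rw [hy1, hy2] at h2
    rw [h1, hg]
    rcases h2 with ⟨ha, hb⟩ | ⟨ha, hb⟩ <;> tauto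
  have hper : x ∈ Function.periodicPts ⇑σ := by
    refine ⟨orderOf σ, orderOf_pos σ, ?_⟩
    show (⇑σ)^[orderOf σ] x = x
    rw [Equiv.Perm.iterate_eq_pow, pow_orderOf_eq_one]
    rfl
  set r := Function.minimalPeriod ⇑σ x with hr
  have hr0 : 0 < r := Function.minimalPeriod_pos_of_mem_periodicPts hper
  have hcyc : ∀ k : ℕ, ((σ ^ k) x ∈ A ↔ ((x ∈ A) ↔ Even k)) := by
    intro k
    induction k with
    | zero => simp
    | succ k ih =>
      have hsc : σ.SameCycle x ((σ ^ k) x) := ⟨(k : ℤ), by simp [zpow_natCast]⟩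
      have hval : ((σ ^ k) x).val % 2 = 0 := by
        have h3 := hall _ hsc; omega
      rw [pow_succ', Equiv.Perm.mul_apply, key _ hval, ih, Nat.even_add_one]
      tauto
  have hxr : (σ ^ r) x = x := by
    have h4 := Function.iterate_minimalPeriod (f := ⇑σ) (x := x)
    rwa [Equiv.Perm.iterate_eq_pow] at h4
  have hEven : Even r := by
    have h5 := hcyc r
    rw [hxr] at h5
    tauto
  have hset : {y | σ.SameCycle x y} = (fun i => (⇑σ)^[i] x) '' Set.Iio r := by
    ext y
    constructor
    · intro hy
      obtain ⟨i, hi, rfl⟩ := hy.exists_pow_eq'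
      exact ⟨i % r, Nat.mod_lt _ hr0, by
        show (⇑σ)^[i % r] x = (σ ^ i) x
        rw [hr, Function.iterate_mod_minimalPeriod_eq, Equiv.Perm.iterate_eq_pow]⟩
    · rintro ⟨i, _, rfl⟩
      exact ⟨(i : ℤ), by simp [zpow_natCast, ← Equiv.Perm.iterate_eq_pow]⟩
  rw [hset, Set.ncard_image_of_injOn, ← Finset.coe_Iio, Set.ncard_coe_finset,
    Nat.card_Iio]
  · exact hEven
  · exact Function.iterate_injOn_Iio_minimalPeriod
end

section
/- Let n, m ≥ 1 and let π ∈ J_{2n,2m}; set I = I_{2n+2m}. Then every cycle (orbit) of the composed permutation I∘π has even cardinality. -/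
/-!
Let `A` witness that `G_π` is bipartite. Since `π` preserves `A` while `I` exchanges the two
elements of every pair `{2i-1, 2i}`, the permutation `I ∘ π` swaps `A` and its complement.
So on each of its cycles it maps the part inside `A` bijectively onto the part outside `A`,
and the cycle has even size.
-/

theorem Equiv.Perm.even_ncard_sameCycle_of_apply_mem_iff_notMem {α : Type*} [Finite α]
    (σ : Equiv.Perm α) {A : Set α} (hσA : ∀ z, σ z ∈ A ↔ z ∉ A) (x : α) :
    Even {y | σ.SameCycle x y}.ncard := by
  set O := {y | σ.SameCycle x y}
  have himage : σ '' (O ∩ A) = O \ A := by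
    ext w
    have hw := hσA (σ.symm w)
    rw [Equiv.apply_symm_apply] at hw
    simp only [Equiv.image_eq_preimage_symm, Set.mem_preimage, Set.mem_inter_iff, Set.mem_sdiff,
      O, Set.mem_ofPred_eq, Equiv.Perm.sameCycle_symm_apply_right]
    tauto
  have hcard : (O \ A).ncard = (O ∩ A).ncard := by
    rw [← himage, Set.ncard_image_of_injective _ σ.injective]
  exact ⟨(O ∩ A).ncard, by rw [← Set.ncard_inter_add_ncard_sdiff_eq_ncard O A, hcard]⟩

theorem intervalInvolution_val {N : ℕ} (hN : Even N) (x : Fin N) :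
    (intervalInvolution N x).val = if x.val % 2 = 0 then x.val + 1 else x.val - 1 := by
  obtain ⟨k, rfl⟩ := hN
  show (if x.val % 2 = 0 then min (x.val + 1) (k + k - 1) else x.val - 1) = _
  split_ifs <;> omega

theorem BipartSet.apply_mem_iff_s7 {N : ℕ} {π : Equiv.Perm (Fin N)} {A : Set (Fin N)}
    (hA : BipartSet π A) (z : Fin N) : π z ∈ A ↔ z ∈ A := by
  have h := π.injective.mem_set_image (s := A) (a := z)
  rwa [hA.1] at h

theorem BipartSet.intervalInvolution_apply_mem_iff {N : ℕ} (hN : Even N)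
    {π : Equiv.Perm (Fin N)} {A : Set (Fin N)} (hA : BipartSet π A) (z : Fin N) :
    intervalInvolution N z ∈ A ↔ z ∉ A := by
  have hIz := intervalInvolution_val hN z
  obtain ⟨i, hi⟩ : ∃ i, z.val / 2 = i := ⟨_, rfl⟩
  have hlt : 2 * i + 1 < N := by obtain ⟨k, rfl⟩ := hN; omega
  have hpair := hA.2 i hlt
  rcases Nat.mod_two_eq_zero_or_one z.val with hz | hz
  · have hfst : (⟨2 * i, Nat.lt_of_succ_lt hlt⟩ : Fin N) = z :=
      Fin.ext (by change 2 * i = z.val; omega)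
    have hsnd : (⟨2 * i + 1, hlt⟩ : Fin N) = intervalInvolution N z :=
      Fin.ext (by change 2 * i + 1 = _; rw [hIz, if_pos hz]; omega)
    rw [hfst, hsnd] at hpair
    exact (xor_iff_not_iff'.mp hpair).symm
  · have hfst : (⟨2 * i, Nat.lt_of_succ_lt hlt⟩ : Fin N) = intervalInvolution N z :=
      Fin.ext (by change 2 * i = _; rw [hIz, if_neg (by omega)]; omega)
    have hsnd : (⟨2 * i + 1, hlt⟩ : Fin N) = z :=
      Fin.ext (by change 2 * i + 1 = z.val; omega)
    rw [hfst, hsnd] at hpair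
    exact xor_iff_iff_not.mp hpair

theorem stmt_7_general (n m : ℕ)
    (π : Equiv.Perm (Fin (2 * n + 2 * m))) (hπ : memJ n m π) :
    ∀ x : Fin (2 * n + 2 * m),
      Even (Set.ncard {y | (intervalInvolution (2 * n + 2 * m) * π).SameCycle x y}) := by
  obtain ⟨-, ⟨A, hA⟩, -⟩ := hπ
  have hN : Even (2 * n + 2 * m) := ⟨n + m, by ring⟩
  refine Equiv.Perm.even_ncard_sameCycle_of_apply_mem_iff_notMem _ (A := A) fun z => ?_
  rw [Equiv.Perm.mul_apply, hA.intervalInvolution_apply_mem_iff hN, hA.apply_mem_iff_s7]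

theorem stmt_7 (n m : ℕ) (hn : 1 ≤ n) (hm : 1 ≤ m)
    (π : Equiv.Perm (Fin (2 * n + 2 * m))) (hπ : memJ n m π) :
    ∀ x : Fin (2 * n + 2 * m),
      Even (Set.ncard {y | (intervalInvolution (2 * n + 2 * m) * π).SameCycle x y}) :=
  stmt_7_general n m π hπ
end

section
/- Let n, m ≥ 1, let π ∈ J_{2n,2m}, set I = I_{2n+2m} and α = I∘π. Then the even numbers appear in increasing cyclic order in the cycles of α, in the following sense: for each j ∈ {1,…,n}, if t ≥ 1 is minimal with α^t(2j) even, then α^t(2j) = 2j+2 when j < n and α^t(2j) = 2 when j = n; and for each j ∈ {n+1,…,n+m}, if t ≥ 1 is minimal with α^t(2j) even, then α^t(2j) = 2j+2 when j < n+m and α^t(2j) = 2n+2 when j = n+m. -/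
/-! Write `α = I π` as `E β⁻¹` with `E = I γ` and `β = π⁻¹ γ`. The permutation `E` fixes
every odd number and sends each even number to the next even number of its `γ`-cycle. Hence,
from an even number `x`, the `α`-orbit agrees with the `β⁻¹`-orbit as long as it only meets odd
numbers; the first even number it reaches on that `β`-cycle must be `x` itself because `β`
separates even numbers, and at that step `E` sends it to its successor. -/

theorem val_finRotate {p : ℕ} (i : Fin p) :
    (finRotate p i).val = if i.val + 1 = p then 0 else i.val + 1 := by
  obtain ⟨p, rfl⟩ : ∃ p', p = p' + 1 := ⟨p - 1, by have := i.isLt; omega⟩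
  rw [coe_finRotate]
  simp [Fin.ext_iff]

theorem annularGamma_castAdd (p q : ℕ) (i : Fin p) :
    annularGamma p q (Fin.castAdd q i) = Fin.castAdd q (finRotate p i) := by
  simp [annularGamma, Equiv.permCongr_apply, finSumFinEquiv_symm_apply_castAdd]

theorem annularGamma_natAdd (p q : ℕ) (i : Fin q) :
    annularGamma p q (Fin.natAdd p i) = Fin.natAdd p (finRotate q i) := by
  simp [annularGamma, Equiv.permCongr_apply, finSumFinEquiv_symm_apply_natAdd]

theorem val_annularGamma (p q : ℕ) (x : Fin (p + q)) :
    (annularGamma p q x).val =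
      if x.val + 1 = p then 0 else if x.val + 1 = p + q then p else x.val + 1 := by
  induction x using Fin.addCases with
  | left i =>
    have := i.isLt
    rw [annularGamma_castAdd, Fin.val_castAdd, Fin.val_castAdd, val_finRotate]
    split_ifs <;> omega
  | right i =>
    have := i.isLt
    rw [annularGamma_natAdd, Fin.val_natAdd, Fin.val_natAdd, val_finRotate]
    split_ifs <;> omega

theorem val_intervalInvolution {N : ℕ} (hN : N % 2 = 0) (x : Fin N) :
    (intervalInvolution N x).val = if x.val % 2 = 0 then x.val + 1 else x.val - 1 := by
  have := x.isLt
  simp only [intervalInvolution, Function.Involutive.toPerm, Equiv.coe_fn_mk]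
  split_ifs <;> omega

namespace Equiv.Perm

variable {X : Type*} {E β : Perm X} {P : X → Prop}

theorem apply_iff_of_forall_not_apply_eq (hfix : ∀ y, ¬P y → E y = y) (y : X) :
    P (E y) ↔ P y := by
  by_cases hy : P y
  · refine iff_of_true (not_not.1 fun hEy => ?_) hy
    rw [E.injective (hfix _ hEy)] at hEy
    exact hEy hy
  · rw [hfix y hy]

theorem mul_inv_pow_apply_eq_inv_pow_apply (hfix : ∀ y, ¬P y → E y = y) {x : X} {s : ℕ}
    (hs : ∀ u, 1 ≤ u → u ≤ s → ¬P (((E * β⁻¹) ^ u) x)) :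
    ((E * β⁻¹) ^ s) x = (β⁻¹ ^ s) x := by
  induction s with
  | zero => rfl
  | succ s ih =>
    have hstep : ((E * β⁻¹) ^ (s + 1)) x = E ((β⁻¹ ^ (s + 1)) x) := by
      rw [pow_succ', mul_apply, ih fun u hu hus => hs u hu (by omega), mul_apply,
        pow_succ', mul_apply]
    have hnot : ¬P ((β⁻¹ ^ (s + 1)) x) := by
      rw [← apply_iff_of_forall_not_apply_eq hfix, ← hstep]
      exact hs (s + 1) (by omega) le_rfl
    rw [hstep, hfix _ hnot]

theorem mul_inv_pow_apply_eq_of_first_return (hfix : ∀ y, ¬P y → E y = y)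
    (hsep : ∀ x y, β.SameCycle x y → P x → P y → x = y) {x : X} (hx : P x) {t : ℕ}
    (ht : 1 ≤ t) (hPt : P (((E * β⁻¹) ^ t) x))
    (hmin : ∀ u, 1 ≤ u → u < t → ¬P (((E * β⁻¹) ^ u) x)) :
    ((E * β⁻¹) ^ t) x = E x := by
  obtain ⟨s, rfl⟩ : ∃ s, t = s + 1 := ⟨t - 1, by omega⟩
  have hstep : ((E * β⁻¹) ^ (s + 1)) x = E ((β⁻¹ ^ (s + 1)) x) := by
    rw [pow_succ', mul_apply, mul_inv_pow_apply_eq_inv_pow_apply hfix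
      fun u hu hus => hmin u hu (by omega), mul_apply, pow_succ', mul_apply]
  have hP : P ((β⁻¹ ^ (s + 1)) x) := by
    rwa [← apply_iff_of_forall_not_apply_eq hfix, ← hstep]
  have hcycle : β.SameCycle x ((β⁻¹ ^ (s + 1)) x) :=
    sameCycle_inv.1 (sameCycle_pow_right.2 (SameCycle.refl _ _))
  rw [hstep, ← hsep _ _ hcycle hx hP]

end Equiv.Perm

theorem val_intervalInvolution_mul_annularGamma {p q : ℕ} (hp : p % 2 = 0) (hq : q % 2 = 0)
    (x : Fin (p + q)) :
    ((intervalInvolution (p + q) * annularGamma p q) x).val =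
      if x.val % 2 = 0 then x.val
      else if x.val + 1 = p then 1
      else if x.val + 1 = p + q then p + 1
      else x.val + 2 := by
  have := x.isLt
  rw [Equiv.Perm.mul_apply, val_intervalInvolution (by omega), val_annularGamma]
  split_ifs <;> omega

theorem intervalInvolution_mul_pow_apply_of_first_even {p q : ℕ} (hp : p % 2 = 0)
    (hq : q % 2 = 0) {π : Equiv.Perm (Fin (p + q))}
    (hsep : SeparatesEven (π⁻¹ * annularGamma p q)) {x : Fin (p + q)}
    (hx : (x.val + 1) % 2 = 0) {t : ℕ} (ht : 1 ≤ t)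
    (heven : ((((intervalInvolution (p + q) * π) ^ t) x).val + 1) % 2 = 0)
    (hodd : ∀ u, 1 ≤ u → u < t →
      ¬ (((((intervalInvolution (p + q) * π) ^ u) x).val + 1) % 2 = 0)) :
    ((intervalInvolution (p + q) * π) ^ t) x =
      (intervalInvolution (p + q) * annularGamma p q) x := by
  have hfactor : intervalInvolution (p + q) * π =
      intervalInvolution (p + q) * annularGamma p q * (π⁻¹ * annularGamma p q)⁻¹ := by
    group
  have hfix : ∀ y : Fin (p + q), ¬(y.val + 1) % 2 = 0 →
      (intervalInvolution (p + q) * annularGamma p q) y = y := fun y hy =>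
    Fin.ext (by rw [val_intervalInvolution_mul_annularGamma hp hq, if_pos (by omega)])
  rw [hfactor] at heven hodd ⊢
  exact Equiv.Perm.mul_inv_pow_apply_eq_of_first_return hfix hsep hx ht heven hodd

theorem stmt_9 (n m : ℕ)
    (π : Equiv.Perm (Fin (2 * n + 2 * m))) (hπ : memJ n m π) :
    (∀ j : ℕ, (hj1 : 1 ≤ j) → (hj2 : j ≤ n) → ∀ t : ℕ, 1 ≤ t →
      ((((intervalInvolution (2 * n + 2 * m) * π) ^ t)
          (⟨2 * j - 1, by omega⟩ : Fin (2 * n + 2 * m))).val + 1) % 2 = 0 →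
      (∀ u : ℕ, 1 ≤ u → u < t →
        ¬ (((((intervalInvolution (2 * n + 2 * m) * π) ^ u)
            (⟨2 * j - 1, by omega⟩ : Fin (2 * n + 2 * m))).val + 1) % 2 = 0)) →
      ((((intervalInvolution (2 * n + 2 * m) * π) ^ t)
          (⟨2 * j - 1, by omega⟩ : Fin (2 * n + 2 * m))).val
        = if j < n then 2 * j + 1 else 1)) ∧
    (∀ j : ℕ, (hj1 : n + 1 ≤ j) → (hj2 : j ≤ n + m) → ∀ t : ℕ, 1 ≤ t →
      ((((intervalInvolution (2 * n + 2 * m) * π) ^ t)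
          (⟨2 * j - 1, by omega⟩ : Fin (2 * n + 2 * m))).val + 1) % 2 = 0 →
      (∀ u : ℕ, 1 ≤ u → u < t →
        ¬ (((((intervalInvolution (2 * n + 2 * m) * π) ^ u)
            (⟨2 * j - 1, by omega⟩ : Fin (2 * n + 2 * m))).val + 1) % 2 = 0)) →
      ((((intervalInvolution (2 * n + 2 * m) * π) ^ t)
          (⟨2 * j - 1, by omega⟩ : Fin (2 * n + 2 * m))).val
        = if j < n + m then 2 * j + 1 else 2 * n + 1)) := by
  obtain ⟨-, -, hsep⟩ := hπ
  have hp : 2 * n % 2 = 0 := by omega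
  have hq : 2 * m % 2 = 0 := by omega
  refine ⟨fun j hj1 hj2 t ht heven hodd => ?_, fun j hj1 hj2 t ht heven hodd => ?_⟩ <;>
  · rw [intervalInvolution_mul_pow_apply_of_first_even hp hq hsep (by dsimp only; omega) ht
      heven hodd, val_intervalInvolution_mul_annularGamma hp hq]
    dsimp only
    split_ifs <;> omega
end

section
/- Let n, m ≥ 1 and let γ = γ_{n,m} be the permutation of {1,…,n+m} with cycles (1,…,n)(n+1,…,n+m). The number of permutations π ∈ S_NC(n,m) such that both π and π⁻¹γ are fixed-point-free involutions equals n if n = m, and equals 0 if n ≠ m. -/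
namespace Equiv.Perm

variable {α β : Type*}

theorem sameCycle_iff_of_involutive {π : Perm α} (hπ : Function.Involutive π) {x y : α} :
    π.SameCycle x y ↔ y = x ∨ y = π x := by
  have hsq : π ^ (2 : ℤ) = 1 := ext fun z => by rw [zpow_two, mul_apply, hπ z, one_apply]
  constructor
  · rintro ⟨k, rfl⟩
    obtain ⟨j, rfl | rfl⟩ := Int.even_or_odd' k
    · simp [zpow_mul, hsq]
    · simp [zpow_add_one, zpow_mul, hsq]
  · rintro (rfl | rfl)
    · exact SameCycle.refl _ _
    · exact sameCycle_apply_right.mpr (SameCycle.refl _ _)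

theorem sameCycle_permCongr (e : α ≃ β) (σ : Perm α) {a b : α} :
    (e.permCongr σ).SameCycle (e a) (e b) ↔ σ.SameCycle a b := by
  have hpow (k : ℤ) : e.permCongr σ ^ k = e.permCongr (σ ^ k) := (map_zpow e.permCongrHom σ k).symm
  simp only [SameCycle, hpow, permCongr_apply, symm_apply_apply, e.apply_eq_iff_eq]

theorem sumCongr_zpow (f : Perm α) (g : Perm β) (k : ℤ) :
    sumCongr f g ^ k = sumCongr (f ^ k) (g ^ k) := by
  simpa using (map_zpow (sumCongrHom α β) (f, g) k).symm

theorem sameCycle_sumCongr_inl {f : Perm α} {g : Perm β} {a b : α} :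
    (sumCongr f g).SameCycle (.inl a) (.inl b) ↔ f.SameCycle a b := by
  simp [SameCycle, sumCongr_zpow]

theorem sameCycle_sumCongr_inr {f : Perm α} {g : Perm β} {a b : β} :
    (sumCongr f g).SameCycle (.inr a) (.inr b) ↔ g.SameCycle a b := by
  simp [SameCycle, sumCongr_zpow]

theorem not_sameCycle_sumCongr_inl_inr {f : Perm α} {g : Perm β} {a : α} {b : β} :
    ¬ (sumCongr f g).SameCycle (.inl a) (.inr b) := by
  simp [SameCycle, sumCongr_zpow]

theorem SameCycle.apply_of_conj_eq_inv {π ρ : Perm α}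
    (hconj : π * ρ * π⁻¹ = ρ⁻¹) {x y : α} (h : ρ.SameCycle x y) : ρ.SameCycle (π x) (π y) := by
  simpa [hconj] using h.conj (g := π)

theorem conj_eq_inv_of_involutive {π ρ : Perm α}
    (hπ : Function.Involutive π) (hπρ : Function.Involutive (π⁻¹ * ρ)) : π * ρ * π⁻¹ = ρ⁻¹ := by
  have hπinv : π⁻¹ = π := inv_eq_of_mul_eq_one_right (Equiv.ext hπ)
  have hsq : π⁻¹ * ρ * (π⁻¹ * ρ) = 1 := Equiv.ext hπρ
  rw [hπinv] at hsq ⊢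
  exact eq_inv_of_mul_eq_one_left (by rw [← hsq]; group)

end Equiv.Perm

theorem sameCycle_finRotate {n : ℕ} (i j : Fin n) : (finRotate n).SameCycle i j := by
  rcases lt_or_ge n 2 with hn | hn
  · have : Subsingleton (Fin n) := Fin.subsingleton_iff_le_one.mpr (by omega)
    rw [Subsingleton.elim i j]
  · have hsupp := support_finRotate_of_le hn
    exact (isCycle_finRotate_of_le hn).sameCycle
      (Equiv.Perm.mem_support.mp (hsupp ▸ Finset.mem_univ i))
      (Equiv.Perm.mem_support.mp (hsupp ▸ Finset.mem_univ j))

theorem annularGamma_sameCycle_iff {p q : ℕ} (x y : Fin (p + q)) :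
    (annularGamma p q).SameCycle x y ↔ ((x : ℕ) < p ↔ (y : ℕ) < p) := by
  obtain ⟨a, rfl⟩ := finSumFinEquiv.surjective x
  obtain ⟨b, rfl⟩ := finSumFinEquiv.surjective y
  rw [annularGamma, Equiv.Perm.sameCycle_permCongr]
  rcases a with i | i <;> rcases b with j | j
  · simp [Equiv.Perm.sameCycle_sumCongr_inl, sameCycle_finRotate]
  · simp [Equiv.Perm.not_sameCycle_sumCongr_inl_inr]
  · simp [Equiv.Perm.sameCycle_comm, Equiv.Perm.not_sameCycle_sumCongr_inl_inr]
  · simp [Equiv.Perm.sameCycle_sumCongr_inr, sameCycle_finRotate]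

theorem annularGamma_inl {p q : ℕ} [NeZero p] (i : Fin p) :
    annularGamma p q (finSumFinEquiv (.inl i)) = finSumFinEquiv (.inl (i + 1)) := by
  simp [annularGamma, finRotate_apply]

theorem annularGamma_inr {p q : ℕ} [NeZero q] (i : Fin q) :
    annularGamma p q (finSumFinEquiv (.inr i)) = finSumFinEquiv (.inr (i + 1)) := by
  simp [annularGamma, finRotate_apply]

def IsPairing {α : Type*} (π : Equiv.Perm α) : Prop :=
  ∀ x, π (π x) = x ∧ π x ≠ x

theorem IsPairing.involutive {α : Type*} {π : Equiv.Perm α} (h : IsPairing π) :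
    Function.Involutive π :=
  fun x => (h x).1

theorem mul_cycleCount_eq {N d : ℕ} (π : Equiv.Perm (Fin N))
    (hd : ∀ x, {y | π.SameCycle x y}.ncard = d) : d * cycleCount π = N := by
  classical
  set orbit : Fin N → Set (Fin N) := fun x => {y | π.SameCycle x y}
  have horbit_eq (a x : Fin N) : orbit a = orbit x ↔ π.SameCycle x a := by
    refine ⟨fun h => (h ▸ Equiv.Perm.SameCycle.refl π a : a ∈ orbit x), fun h => ?_⟩
    ext y
    exact ⟨h.trans, h.symm.trans⟩
  have hcount : cycleCount π = (Finset.univ.image orbit).card := by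
    rw [cycleCount, ← Set.ncard_coe_finset, Finset.coe_image, Finset.coe_univ, Set.image_univ]
    simp only [Set.range, eq_comm]
    rfl
  have hfiber : ∀ O ∈ Finset.univ.image orbit, (Finset.univ.filter (orbit · = O)).card = d := by
    simp only [Finset.mem_image, Finset.mem_univ, true_and, forall_exists_index]
    rintro O x rfl
    rw [← hd x, ← Set.ncard_coe_finset]
    congr 1
    ext a
    simp [horbit_eq]
  rw [hcount, mul_comm, ← Finset.sum_const_nat hfiber,
    ← Finset.card_eq_sum_card_image, Finset.card_univ, Fintype.card_fin]

theorem IsPairing.two_mul_cycleCount {N : ℕ} {π : Equiv.Perm (Fin N)} (hπ : IsPairing π) :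
    2 * cycleCount π = N := by
  refine mul_cycleCount_eq π fun x => ?_
  simp only [Equiv.Perm.sameCycle_iff_of_involutive hπ.involutive]
  exact Set.ncard_pair (hπ x).2.symm

section JointTrans

variable {N : ℕ} {π ρ σ : Equiv.Perm (Fin N)}

theorem JointTrans.mem_of_invariant (h : JointTrans π ρ) {S : Set (Fin N)}
    (hπ : ∀ x, π x ∈ S ↔ x ∈ S) (hρ : ∀ x, ρ x ∈ S ↔ x ∈ S) {x : Fin N} (hx : x ∈ S)
    (y : Fin N) : y ∈ S := by
  obtain ⟨g, hg, rfl⟩ := h x y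
  suffices ∀ z, g z ∈ S ↔ z ∈ S from (this x).mpr hx
  induction hg using Subgroup.closure_induction with
  | mem τ hτ => rcases hτ with rfl | rfl <;> assumption
  | one => simp
  | mul a b _ _ ha hb => intro z; rw [Equiv.Perm.mul_apply, ha, hb]
  | inv a _ ha => intro z; simpa using (ha (a⁻¹ z)).symm

theorem JointTrans.of_sameCycle (x₀ : Fin N)
    (h : ∀ y, ρ.SameCycle x₀ y ∨ ρ.SameCycle (π x₀) y) : JointTrans π ρ := by
  have hπ : π ∈ Subgroup.closure {π, ρ} := Subgroup.subset_closure (Set.mem_insert _ _)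
  have hρ : ρ ∈ Subgroup.closure {π, ρ} := Subgroup.subset_closure (Set.mem_insert_of_mem _ rfl)
  have reach (y : Fin N) : ∃ g ∈ Subgroup.closure {π, ρ}, g x₀ = y := by
    rcases h y with ⟨k, rfl⟩ | ⟨k, rfl⟩
    · exact ⟨ρ ^ k, zpow_mem hρ k, rfl⟩
    · exact ⟨ρ ^ k * π, mul_mem (zpow_mem hρ k) hπ, rfl⟩
  intro x y
  obtain ⟨g, hg, rfl⟩ := reach x
  obtain ⟨g', hg', rfl⟩ := reach y
  exact ⟨g' * g⁻¹, mul_mem hg' (inv_mem hg), by simp⟩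

theorem JointTrans.not_sameCycle_apply (h : JointTrans π ρ) (hπ : Function.Involutive π)
    (hconj : π * ρ * π⁻¹ = ρ⁻¹) {a b : Fin N} (hab : ¬ ρ.SameCycle a b) (x : Fin N) :
    ¬ ρ.SameCycle x (π x) := by
  intro hx
  have hπS (y : Fin N) : ρ.SameCycle x (π y) ↔ ρ.SameCycle x y := by
    refine ⟨fun hy => ?_, fun hy => hx.trans (hy.apply_of_conj_eq_inv hconj)⟩
    simpa only [hπ _] using (hx.symm.trans hy).apply_of_conj_eq_inv hconj
  have hS := h.mem_of_invariant (S := {y | ρ.SameCycle x y}) hπS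
    (fun _ => Equiv.Perm.sameCycle_apply_right) (Equiv.Perm.SameCycle.refl ρ x)
  exact hab ((hS a).symm.trans (hS b))

theorem JointTrans.eq_of_apply_eq (h : JointTrans π ρ) (hπ : Function.Involutive π)
    (hσ : Function.Involutive σ) (hπρ : π * ρ * π⁻¹ = ρ⁻¹) (hσρ : σ * ρ * σ⁻¹ = ρ⁻¹)
    {x : Fin N} (hx : π x = σ x) : π = σ := by
  have hρ {τ : Equiv.Perm (Fin N)} (hτ : τ * ρ * τ⁻¹ = ρ⁻¹) (y : Fin N) : τ (ρ y) = ρ⁻¹ (τ y) := by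
    rw [← hτ]; simp
  refine Equiv.ext fun y => h.mem_of_invariant (S := {y | π y = σ y}) (fun y => ?_)
    (fun y => ?_) hx y
  · change π (π y) = σ (π y) ↔ π y = σ y
    rw [hπ y, eq_comm, ← hσ.injective.eq_iff, hσ]
  · change π (ρ y) = σ (ρ y) ↔ π y = σ y
    rw [hρ hπρ, hρ hσρ, EmbeddingLike.apply_eq_iff_eq]

end JointTrans

def IsAnnularPairing (p q : ℕ) (π : Equiv.Perm (Fin (p + q))) : Prop :=
  AnnularNC p q π ∧ IsPairing π ∧ IsPairing (π⁻¹ * annularGamma p q)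

section Annulus

variable {p q : ℕ} {π : Equiv.Perm (Fin (p + q))}

theorem IsAnnularPairing.conj_eq_inv (h : IsAnnularPairing p q π) :
    π * annularGamma p q * π⁻¹ = (annularGamma p q)⁻¹ :=
  Equiv.Perm.conj_eq_inv_of_involutive h.2.1.involutive h.2.2.involutive

theorem IsAnnularPairing.lt_iff_not_apply_lt (h : IsAnnularPairing p q π) (hp : 0 < p) (hq : 0 < q)
    (x : Fin (p + q)) : (x : ℕ) < p ↔ ¬ (π x : ℕ) < p := by
  have hcross := h.1.1.not_sameCycle_apply h.2.1.involutive h.conj_eq_inv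
    (a := ⟨0, by omega⟩) (b := ⟨p, by omega⟩) (by simp [annularGamma_sameCycle_iff, hp]) x
  rw [annularGamma_sameCycle_iff] at hcross
  tauto

theorem eq_of_forall_lt_iff_not_apply_lt (h : ∀ x : Fin (p + q), (x : ℕ) < p ↔ ¬ (π x : ℕ) < p) :
    p = q := by
  set s := Finset.univ.filter fun x : Fin (p + q) => (x : ℕ) < p
  have hs : s.card = p := by simp [s, Fin.card_filter_val_lt]
  have hmem (x : Fin (p + q)) : x ∈ s ↔ (x : ℕ) < p := by simp [s]
  have hle : s.card ≤ sᶜ.card := Finset.card_le_card_of_injOn π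
    (fun x hx => by simpa [hmem] using (h x).mp ((hmem x).mp hx)) π.injective.injOn
  have hge : sᶜ.card ≤ s.card := Finset.card_le_card_of_injOn π
    (fun x hx => by simpa [hmem, h x] using hx) π.injective.injOn
  rw [Finset.card_compl, hs, Fintype.card_fin] at hle hge
  omega

theorem IsAnnularPairing.eq (h : IsAnnularPairing p q π) (hp : 0 < p) (hq : 0 < q) : p = q :=
  eq_of_forall_lt_iff_not_apply_lt (h.lt_iff_not_apply_lt hp hq)

end Annulus

section Spoke

variable {n : ℕ} [NeZero n]

/-- The spoke diagram joining `i` on the outer circle to `c - i` on the inner one. -/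
def annularSpoke (n : ℕ) [NeZero n] (c : Fin n) : Equiv.Perm (Fin (n + n)) :=
  finSumFinEquiv.permCongr
    (((Equiv.subLeft c).sumCongr (Equiv.subLeft c)).trans (Equiv.sumComm _ _))

theorem annularSpoke_inl (c i : Fin n) :
    annularSpoke n c (finSumFinEquiv (.inl i)) = finSumFinEquiv (.inr (c - i)) := by
  simp only [annularSpoke, Equiv.permCongr_apply, Equiv.symm_apply_apply, Equiv.trans_apply,
    Equiv.sumCongr_apply, Sum.map_inl, Equiv.sumComm_apply, Sum.swap_inl, Equiv.subLeft_apply]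

theorem annularSpoke_inr (c i : Fin n) :
    annularSpoke n c (finSumFinEquiv (.inr i)) = finSumFinEquiv (.inl (c - i)) := by
  simp only [annularSpoke, Equiv.permCongr_apply, Equiv.symm_apply_apply, Equiv.trans_apply,
    Equiv.sumCongr_apply, Sum.map_inr, Equiv.sumComm_apply, Sum.swap_inr, Equiv.subLeft_apply]

theorem isPairing_annularSpoke (c : Fin n) : IsPairing (annularSpoke n c) := by
  intro x
  obtain ⟨i | i, rfl⟩ := finSumFinEquiv.surjective x <;>
    simp only [annularSpoke_inl, annularSpoke_inr, sub_sub_cancel, ne_eq,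
      EmbeddingLike.apply_eq_iff_eq, reduceCtorEq, not_false_eq_true, and_self]

theorem annularSpoke_inv (c : Fin n) : (annularSpoke n c)⁻¹ = annularSpoke n c :=
  inv_eq_of_mul_eq_one_right (Equiv.ext (isPairing_annularSpoke c).involutive)

theorem annularSpoke_mul_annularGamma (c : Fin n) :
    annularSpoke n c * annularGamma n n = annularSpoke n (c - 1) := by
  ext1 x
  obtain ⟨i | i, rfl⟩ := finSumFinEquiv.surjective x <;>
    simp only [Equiv.Perm.mul_apply, annularSpoke_inl, annularSpoke_inr, annularGamma_inl,
      annularGamma_inr, sub_add_eq_sub_sub, sub_right_comm]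

theorem jointTrans_annularSpoke (c : Fin n) : JointTrans (annularSpoke n c) (annularGamma n n) := by
  refine JointTrans.of_sameCycle (finSumFinEquiv (.inl 0)) fun y => ?_
  rw [annularSpoke_inl]
  simp only [annularGamma_sameCycle_iff, finSumFinEquiv_apply_left,
    finSumFinEquiv_apply_right, Fin.val_castAdd, Fin.val_natAdd, Fin.val_zero]
  have := NeZero.pos n
  omega

theorem annularSpoke_injective : Function.Injective (annularSpoke n) := fun c d h => by
  simpa only [annularSpoke_inl, sub_zero, EmbeddingLike.apply_eq_iff_eq, Sum.inr.injEq] using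
    congrArg (· (finSumFinEquiv (.inl 0))) h

theorem isAnnularPairing_annularSpoke (c : Fin n) : IsAnnularPairing n n (annularSpoke n c) := by
  refine ⟨⟨jointTrans_annularSpoke c, ?_⟩, isPairing_annularSpoke c, ?_⟩
  · rw [annularSpoke_inv, annularSpoke_mul_annularGamma]
    have h₁ := (isPairing_annularSpoke c).two_mul_cycleCount
    have h₂ := (isPairing_annularSpoke (c - 1)).two_mul_cycleCount
    omega
  · rw [annularSpoke_inv, annularSpoke_mul_annularGamma]
    exact isPairing_annularSpoke _

theorem IsAnnularPairing.exists_eq_annularSpoke {π : Equiv.Perm (Fin (n + n))}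
    (h : IsAnnularPairing n n π) : ∃ c, π = annularSpoke n c := by
  set x₀ : Fin (n + n) := finSumFinEquiv (.inl 0)
  have hx₀ : n ≤ π x₀ := not_lt.mp <|
    (h.lt_iff_not_apply_lt (NeZero.pos n) (NeZero.pos n) x₀).mp (by simp [x₀, NeZero.pos n])
  obtain ⟨c, hc⟩ : ∃ c : Fin n, π x₀ = finSumFinEquiv (.inr c) :=
    ⟨⟨π x₀ - n, by omega⟩, Fin.ext (by simp; omega)⟩
  refine ⟨c, h.1.1.eq_of_apply_eq h.2.1.involutive (isPairing_annularSpoke c).involutive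
    h.conj_eq_inv (isAnnularPairing_annularSpoke c).conj_eq_inv (x := x₀) ?_⟩
  rw [hc, annularSpoke_inl, sub_zero]

theorem setOf_isAnnularPairing_eq_range :
    {π | IsAnnularPairing n n π} = Set.range (annularSpoke n) := by
  ext π
  refine ⟨fun h => ?_, ?_⟩
  · obtain ⟨c, rfl⟩ := h.exists_eq_annularSpoke
    exact ⟨c, rfl⟩
  · rintro ⟨c, rfl⟩
    exact isAnnularPairing_annularSpoke c

end Spoke

theorem stmt_14 (n m : ℕ) (hn : 1 ≤ n) (hm : 1 ≤ m) :
    Set.ncard {π : Equiv.Perm (Fin (n + m)) |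
        AnnularNC n m π ∧ (∀ x, π (π x) = x ∧ π x ≠ x) ∧
        (∀ x, (π⁻¹ * annularGamma n m) ((π⁻¹ * annularGamma n m) x) = x ∧
          (π⁻¹ * annularGamma n m) x ≠ x)} =
      if n = m then n else 0 := by
  change {π | IsAnnularPairing n m π}.ncard = _
  split_ifs with hnm
  · subst hnm
    have : NeZero n := NeZero.of_pos hn
    rw [setOf_isAnnularPairing_eq_range, Set.ncard_range_of_injective annularSpoke_injective,
      Nat.card_eq_fintype_card, Fintype.card_fin]
  · have hempty : {π | IsAnnularPairing n m π} = ∅ :=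
      Set.eq_empty_of_forall_notMem fun π hπ => hnm (hπ.eq hn hm)
    rw [hempty, Set.ncard_empty]
end

section
/- Let n, m ≥ 1, set N = 2n+2m and γ = γ_{2n,2m}. Let π be an involution of {1,…,N} such that every cycle of π consists entirely of even numbers or entirely of odd numbers (π is parity preserving) and such that π⁻¹γ separates even numbers. If x and y are even numbers with π(x) = y, then π(γ(y)) = γ⁻¹(x). -/
lemma finRotate_val {N : ℕ} (i : Fin N) :
    ((finRotate N) i).val = if i.val + 1 = N then 0 else i.val + 1 := by
  cases N with
  | zero => exact absurd i.2 (by omega)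
  | succ k =>
    rw [coe_finRotate]
    congr 1
    simp [Fin.ext_iff, Fin.last]

lemma gamma_parity (n m : ℕ) (v : Fin (2*n+2*m)) :
    ((annularGamma (2*n) (2*m)) v).val % 2 = (v.val + 1) % 2 := by
  simp only [annularGamma, Equiv.permCongr_apply]
  rcases lt_or_ge v.val (2*n) with h | h
  · have hv : v = Fin.castAdd (2*m) ⟨v.val, h⟩ := by apply Fin.ext; rfl
    rw [hv, finSumFinEquiv_symm_apply_castAdd]
    simp only [Equiv.sumCongr_apply, Sum.map_inl, finSumFinEquiv_apply_left, Fin.coe_castAdd]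
    rw [finRotate_val]
    simp only
    split <;> omega
  · have h2 : v.val - 2*n < 2*m := by omega
    have hv : v = Fin.natAdd (2*n) ⟨v.val - 2*n, h2⟩ := by apply Fin.ext; simp; omega
    rw [hv, finSumFinEquiv_symm_apply_natAdd]
    simp only [Equiv.sumCongr_apply, Sum.map_inr, finSumFinEquiv_apply_right, Fin.coe_natAdd]
    rw [finRotate_val]
    simp only
    split <;> omega

theorem stmt_17 (n m : ℕ) (hn : 1 ≤ n) (hm : 1 ≤ m)
    (π : Equiv.Perm (Fin (2 * n + 2 * m)))
    (hinv : ∀ x, π (π x) = x)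
    (hpar : ∀ x y : Fin (2 * n + 2 * m), π.SameCycle x y → x.val % 2 = y.val % 2)
    (hsep : SeparatesEven (π⁻¹ * annularGamma (2 * n) (2 * m))) :
    ∀ x y : Fin (2 * n + 2 * m),
      (x.val + 1) % 2 = 0 → (y.val + 1) % 2 = 0 → π x = y →
      π (annularGamma (2 * n) (2 * m) y) = (annularGamma (2 * n) (2 * m))⁻¹ x := by
  intro x y hx hy hxy
  obtain ⟨γ, hγ⟩ : ∃ g, g = annularGamma (2 * n) (2 * m) := ⟨_, rfl⟩
  rw [← hγ] at hsep ⊢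
  have hπinv : ∀ v, π⁻¹ v = π v := fun v =>
    (Equiv.symm_apply_eq π).mpr (hinv v).symm
  have hα : ∀ v, (π⁻¹ * γ) v = π (γ v) := fun v => by
    simp [Equiv.Perm.mul_apply, hπinv]
  -- parity facts
  have hparapp : ∀ v, v.val % 2 = (π v).val % 2 := fun v =>
    hpar v (π v) ⟨1, by simp⟩
  have p1 : (γ y).val % 2 = 0 := by
    have := gamma_parity n m y; rw [← hγ] at this; omega
  have p2 : (π (γ y)).val % 2 = 0 := by rw [← hparapp]; exact p1
  have p3 : (γ (π (γ y))).val % 2 = 1 := by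
    have := gamma_parity n m (π (γ y)); rw [← hγ] at this; omega
  have p4 : (π (γ (π (γ y)))).val % 2 = 1 := by rw [← hparapp]; exact p3
  -- same cycle
  have scc : (π⁻¹ * γ).SameCycle y (π (γ (π (γ y)))) := by
    have : (π⁻¹ * γ).SameCycle y ((π⁻¹ * γ) ((π⁻¹ * γ) y)) := by
      exact Equiv.Perm.sameCycle_apply_right.mpr
        (Equiv.Perm.sameCycle_apply_right.mpr (Equiv.Perm.SameCycle.refl _ _))
    rwa [hα, hα] at this
  have h4 : ((π (γ (π (γ y)))).val + 1) % 2 = 0 := by omega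
  have heq : y = π (γ (π (γ y))) := hsep y _ scc hy h4
  -- conclude
  have hπy : π y = x := by rw [← hxy, hinv]
  have hgz : γ (π (γ y)) = x := by
    have := congrArg π heq
    rw [hinv, hπy] at this
    exact this.symm
  exact (Equiv.eq_symm_apply γ).mpr hgz
end
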